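/- A pair (T,R) is a periodic factorization of ℤ/nℤ (i.e., a factorization in which R is periodic) if and only if there exists a divisor p of n with p ≠ n and a factorization (T,S) of ℤ/pℤ such that R is the direct sum of S and {0, p, 2p, ..., (n/p − 1)p}. -/
import Mathlib


private lemma img_shift (n : ℕ) (R : Finset ℕ) {a b : ℕ} (h : a % n = b % n) :
    R.image (fun r => (r + a) % n) = R.image (fun r => (r + b) % n) := by
  apply Finset.image_congr
  intro r _
  simp only
  rw [Nat.add_mod, h, ← Nat.add_mod]

private lemma img_mul (n g : ℕ) (R : Finset ℕ) (hR : ∀ r ∈ R, r < n)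
    (h : R.image (fun r => (r + g) % n) = R) :
    ∀ a : ℕ, R.image (fun r => (r + a * g) % n) = R := by
  intro a
  induction a with
  | zero =>
    have h1 : R.image (fun r => (r + 0 * g) % n) = R.image id := by
      apply Finset.image_congr
      intro r hr
      simp [Nat.mod_eq_of_lt (hR r hr)]
    simpa using h1
  | succ a ih =>
    have h1 : R.image (fun r => (r + (a + 1) * g) % n)
        = (R.image (fun r => (r + a * g) % n)).image (fun r => (r + g) % n) := by
      rw [Finset.image_image]
      apply Finset.image_congr
      intro r _
      simp only [Function.comp]
      rw [Nat.mod_add_mod]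
      congr 1
      ring
    rw [h1, ih, h]

private lemma bezout_mod (g n : ℕ) (hn : 0 < n) :
    ∃ a : ℕ, (a * g) % n = Nat.gcd g n % n := by
  have hx : (Nat.gcd g n : ℤ) = g * Nat.gcdA g n + n * Nat.gcdB g n := Nat.gcd_eq_gcd_ab g n
  have hn' : (0:ℤ) < (n:ℤ) := by exact_mod_cast hn
  refine ⟨(Nat.gcdA g n % n).toNat, ?_⟩
  have h0 : (0:ℤ) ≤ Nat.gcdA g n % (n:ℤ) := Int.emod_nonneg _ (by omega)
  have key : (((Nat.gcdA g n % n).toNat * g : ℕ) : ℤ) % n = ((Nat.gcd g n : ℕ) : ℤ) % n := by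
    push_cast [Int.toNat_of_nonneg h0]
    rw [hx, Int.add_mul_emod_self_left, Int.mul_emod, Int.emod_emod_of_dvd _ dvd_rfl,
      ← Int.mul_emod, mul_comm]
  exact_mod_cast key

private lemma find_k (n p z u : ℕ) (hn : 0 < n) (hp0 : 0 < p) (hpn : p ∣ n)
    (hu : u < n) (hz : z < n) (hmod : u % p = z % p) :
    ∃ k < n / p, (u + k * p) % n = z := by
  have hmlt : (z + n - u) % n < n := Nat.mod_lt _ hn
  have hdvd1 : p ∣ (z + n - u) := by
    have h1 : u ≡ z + n [MOD p] := by
      unfold Nat.ModEq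
      rw [Nat.add_mod, Nat.mod_eq_zero_of_dvd hpn]
      simp [hmod]
    exact (Nat.modEq_iff_dvd' (by omega)).mp h1
  have hdvd : p ∣ (z + n - u) % n := (Nat.dvd_mod_iff hpn).mpr hdvd1
  refine ⟨(z + n - u) % n / p, Nat.div_lt_div_of_lt_of_dvd hpn hmlt, ?_⟩
  rw [Nat.div_mul_cancel hdvd, Nat.add_mod_mod]
  have h2 : u + (z + n - u) = z + n := by omega
  rw [h2, Nat.add_mod_right, Nat.mod_eq_of_lt hz]

private lemma mem_mod_of_closed (n p : ℕ) (R : Finset ℕ)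
    (hcl : ∀ r ∈ R, p ≤ r → r - p ∈ R) :
    ∀ r ∈ R, r % p ∈ R := by
  intro r
  induction r using Nat.strong_induction_on with
  | _ r ih =>
    intro hr
    by_cases hp : p = 0
    · subst hp; simpa using hr
    by_cases h : r < p
    · rwa [Nat.mod_eq_of_lt h]
    · have h1 : r - p ∈ R := hcl r hr (le_of_not_gt h)
      have h2 := ih (r - p) (by omega) h1
      rwa [Nat.mod_eq_sub_mod (le_of_not_gt h)]

private lemma add_mul_mem (n p : ℕ) (hpn : p ∣ n) (hn : 0 < n) (R : Finset ℕ)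
    (hcl : ∀ r ∈ R, (r + p) % n ∈ R) :
    ∀ s ∈ R, s < p → ∀ k < n / p, s + k * p ∈ R := by
  intro s hs hsp k
  induction k with
  | zero => intro _; simpa using hs
  | succ k ih =>
    intro hk
    have hp0 : 0 < p := Nat.pos_of_dvd_of_pos hpn hn
    have h1 := hcl _ (ih (by omega))
    have hle : (k + 2) * p ≤ n := by
      have : k + 2 ≤ n / p := by omega
      calc (k + 2) * p ≤ (n / p) * p := Nat.mul_le_mul_right _ this
        _ = n := Nat.div_mul_cancel hpn
    have hlt : s + k * p + p < n := by
      have : (k + 2) * p = k * p + p + p := by ring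
      omega
    rw [Nat.mod_eq_of_lt hlt] at h1
    have : s + (k + 1) * p = s + k * p + p := by ring
    rwa [this]


/-- `(T, R)` is a factorization of `ℤ/mℤ`: every `z ∈ {0, …, m-1}` has a unique
representation `z ≡ t + r (mod m)` with `t ∈ T`, `r ∈ R`. -/
def IsFactorization (m : ℕ) (T R : Finset ℕ) : Prop :=
  ∀ z < m, ∃! p : ℕ × ℕ, p.1 ∈ T ∧ p.2 ∈ R ∧ (p.1 + p.2) % m = z

/-- A subset `R` of `ℤ/nℤ` (given by representatives `< n`) is periodic:
`g + R = R` for some `g ≠ 0` in `ℤ/nℤ`. -/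
def IsPeriodic (n : ℕ) (R : Finset ℕ) : Prop :=
  ∃ g : ℕ, ¬ n ∣ g ∧ R.image (fun r => (r + g) % n) = R

/-- `(T, R)` is a periodic factorization of `ℤ/nℤ` (with `R` periodic) iff there is
a divisor `p` of `n`, `p ≠ n`, and a factorization `(T, S)` of `ℤ/pℤ` such that `R`
is the direct sum of `S` and `{0, p, 2p, …, (n/p − 1)p}`. -/
theorem periodic_factorization_iff (n : ℕ) (hn : 0 < n) (T R : Finset ℕ)
    (hT : ∀ t ∈ T, t < n) (hR : ∀ r ∈ R, r < n) :
    (IsFactorization n T R ∧ IsPeriodic n R) ↔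
      ∃ (p : ℕ) (S : Finset ℕ), p ∣ n ∧ p ≠ n ∧ (∀ s ∈ S, s < p) ∧
        IsFactorization p T S ∧
        ∀ z : ℕ, z ∈ R ↔ ∃ s ∈ S, ∃ k < n / p, s + k * p = z := by
  constructor
  · rintro ⟨hfac, g, hg, himg⟩
    have hg' : g % n ≠ 0 := fun h => hg (Nat.dvd_of_mod_eq_zero h)
    set p := Nat.gcd (g % n) n with hpdef
    have hp0 : 0 < p := Nat.gcd_pos_of_pos_right _ hn
    have hpn : p ∣ n := Nat.gcd_dvd_right _ _
    have hplt : p < n :=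
      lt_of_le_of_lt (Nat.le_of_dvd (Nat.pos_of_ne_zero hg') (Nat.gcd_dvd_left _ _))
        (Nat.mod_lt g hn)
    obtain ⟨a, ha⟩ := bezout_mod (g % n) n hn
    have himg1 : R.image (fun r => (r + g % n) % n) = R := by
      rw [← img_shift n R (Nat.mod_mod_of_dvd g dvd_rfl).symm]
      exact himg
    have himgp : R.image (fun r => (r + p) % n) = R := by
      have h2 := img_mul n (g % n) R hR himg1 a
      rw [img_shift n R (show p % n = (a * (g % n)) % n by rw [ha, Nat.mod_eq_of_lt hplt])]
      · exact h2
    have hfwd : ∀ r ∈ R, (r + p) % n ∈ R := fun r hr => by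
      rw [← himgp]; exact Finset.mem_image_of_mem _ hr
    have hbwd : ∀ r ∈ R, p ≤ r → r - p ∈ R := by
      intro r hr hpr
      have hr2 : r ∈ R.image (fun r => (r + p) % n) := by rw [himgp]; exact hr
      obtain ⟨r', hr', heq⟩ := Finset.mem_image.mp hr2
      have hr'n := hR r' hr'
      have hrn := hR r hr
      by_cases hc : r' + p < n
      · rw [Nat.mod_eq_of_lt hc] at heq
        have : r - p = r' := by omega
        rwa [this]
      · exfalso
        have : (r' + p) % n = r' + p - n := by
          rw [Nat.mod_eq_sub_mod (le_of_not_gt hc), Nat.mod_eq_of_lt (by omega)]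
        omega
    have hmodmem := mem_mod_of_closed n p R hbwd
    have haddmem := add_mul_mem n p hpn hn R hfwd
    refine ⟨p, R.filter (· < p), hpn, ne_of_lt hplt, ?_, ?_, ?_⟩
    · intro s hs; exact (Finset.mem_filter.mp hs).2
    · -- IsFactorization p T S
      intro z hz
      have hzn : z < n := lt_of_lt_of_le hz (Nat.le_of_dvd hn hpn)
      obtain ⟨⟨t, r⟩, ⟨htT, hrR, hzeq⟩, huniq⟩ := hfac z hzn
      simp only at htT hrR hzeq
      have hrp : r % p ∈ R.filter (· < p) :=
        Finset.mem_filter.mpr ⟨hmodmem r hrR, Nat.mod_lt _ hp0⟩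
      refine ⟨(t, r % p), ⟨htT, hrp, ?_⟩, ?_⟩
      · show (t + r % p) % p = z
        rw [Nat.add_mod_mod, ← Nat.mod_mod_of_dvd (t + r) hpn, hzeq, Nat.mod_eq_of_lt hz]
      · rintro ⟨t', s'⟩ ⟨ht', hs', heq'⟩
        simp only at ht' hs' heq'
        obtain ⟨hs'R, hs'p⟩ := Finset.mem_filter.mp hs'
        have hu : (t' + s') % n < n := Nat.mod_lt _ hn
        have hmod : (t' + s') % n % p = z % p := by
          rw [Nat.mod_mod_of_dvd _ hpn, heq', Nat.mod_eq_of_lt hz]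
        obtain ⟨k, hk, hkeq⟩ := find_k n p z ((t' + s') % n) hn hp0 hpn hu hzn
          (by rw [hmod, Nat.mod_eq_of_lt hz])
        have hr' : s' + k * p ∈ R := haddmem s' hs'R hs'p k hk
        have heq2 : (t' + (s' + k * p)) % n = z := by
          rw [← Nat.add_assoc, ← Nat.mod_add_mod]
          exact hkeq
        have := huniq (t', s' + k * p) ⟨ht', hr', heq2⟩
        have ht'' : t' = t := by
          have := congrArg Prod.fst this; simpa using this
        have hs'' : s' + k * p = r := by
          have := congrArg Prod.snd this; simpa using this
        have : s' = r % p := by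
          rw [← hs'']
          rw [Nat.add_mul_mod_self_right, Nat.mod_eq_of_lt hs'p]
        simp [ht'', this]
    · -- membership characterization
      intro z
      constructor
      · intro hz
        have hzn := hR z hz
        refine ⟨z % p, Finset.mem_filter.mpr ⟨hmodmem z hz, Nat.mod_lt _ hp0⟩,
          z / p, Nat.div_lt_div_of_lt_of_dvd hpn hzn, Nat.mod_add_div' z p⟩
      · rintro ⟨s, hsS, k, hk, rfl⟩
        obtain ⟨hsR, hsp⟩ := Finset.mem_filter.mp hsS
        exact haddmem s hsR hsp k hk
  · rintro ⟨p, S, hpn, hpne, hSp, hfactp, hmem⟩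
    have hp0 : 0 < p := Nat.pos_of_dvd_of_pos hpn hn
    have hplt : p < n := lt_of_le_of_ne (Nat.le_of_dvd hn hpn) hpne
    have hnp0 : 0 < n / p := Nat.div_pos (le_of_lt hplt) hp0
    have hfwd : ∀ r ∈ R, (r + p) % n ∈ R := by
      intro r hr
      obtain ⟨s, hsS, k, hk, rfl⟩ := (hmem r).mp hr
      have hsp := hSp s hsS
      by_cases hc : k + 1 < n / p
      · have hle : (k + 2) * p ≤ n := by
          have h2 : k + 2 ≤ n / p := by omega
          calc (k + 2) * p ≤ (n / p) * p := Nat.mul_le_mul_right _ h2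
            _ = n := Nat.div_mul_cancel hpn
        have hlt : s + k * p + p < n := by
          have : (k + 2) * p = k * p + p + p := by ring
          omega
        rw [Nat.mod_eq_of_lt hlt]
        exact (hmem _).mpr ⟨s, hsS, k + 1, hc, by ring⟩
      · have hk1 : k + 1 = n / p := by omega
        have hkp : s + k * p + p = s + n := by
          have h3 : (k + 1) * p = n := by rw [hk1]; exact Nat.div_mul_cancel hpn
          have : (k + 1) * p = k * p + p := by ring
          omega
        rw [hkp, Nat.add_mod_right, Nat.mod_eq_of_lt (lt_trans hsp hplt)]
        exact (hmem s).mpr ⟨s, hsS, 0, hnp0, by ring⟩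
    have himg : R.image (fun r => (r + p) % n) = R := by
      apply Finset.eq_of_subset_of_card_le
      · intro x hx
        obtain ⟨r, hr, rfl⟩ := Finset.mem_image.mp hx
        exact hfwd r hr
      · rw [Finset.card_image_of_injOn]
        intro r hr r' hr' heq
        simp only at heq
        have h1 := hR r hr
        have h2 := hR r' hr'
        have h3 : r % n = r' % n := Nat.ModEq.add_right_cancel' p heq
        rwa [Nat.mod_eq_of_lt h1, Nat.mod_eq_of_lt h2] at h3
    refine ⟨?_, p, ?_, himg⟩
    · -- IsFactorization n T R
      intro z hz
      obtain ⟨⟨t, s⟩, ⟨htT, hsS, hts⟩, huniq⟩ := hfactp (z % p) (Nat.mod_lt _ hp0)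
      simp only at htT hsS hts
      have hu : (t + s) % n < n := Nat.mod_lt _ hn
      have hmodeq : (t + s) % n % p = z % p := by
        rw [Nat.mod_mod_of_dvd _ hpn, hts]
      obtain ⟨k, hk, hkeq⟩ := find_k n p z ((t + s) % n) hn hp0 hpn hu hz hmodeq
      have hrR : s + k * p ∈ R := (hmem _).mpr ⟨s, hsS, k, hk, rfl⟩
      have heqz : (t + (s + k * p)) % n = z := by
        rw [← Nat.add_assoc, ← Nat.mod_add_mod]
        exact hkeq
      refine ⟨(t, s + k * p), ⟨htT, hrR, heqz⟩, ?_⟩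
      rintro ⟨t₁, r₁⟩ ⟨ht₁, hr₁, he₁⟩
      simp only at ht₁ hr₁ he₁
      obtain ⟨s₁, hs₁, k₁, hk₁, rfl⟩ := (hmem r₁).mp hr₁
      have hmp : (t₁ + s₁) % p = z % p := by
        have h4 : (t₁ + (s₁ + k₁ * p)) % p = z % p := by
          rw [← Nat.mod_mod_of_dvd _ hpn, he₁]
        rwa [← Nat.add_assoc, Nat.add_mul_mod_self_right] at h4
      have huq := huniq (t₁, s₁) ⟨ht₁, hs₁, hmp⟩
      have ht₁' : t₁ = t := by have := congrArg Prod.fst huq; simpa using this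
      have hs₁' : s₁ = s := by have := congrArg Prod.snd huq; simpa using this
      have hq : n / p * p = n := Nat.div_mul_cancel hpn
      have hklt : k * p < n := by
        calc k * p < (n / p) * p := (Nat.mul_lt_mul_right hp0).mpr hk
          _ = n := hq
      have hk₁lt : k₁ * p < n := by
        calc k₁ * p < (n / p) * p := (Nat.mul_lt_mul_right hp0).mpr hk₁
          _ = n := hq
      have hcan : k₁ * p ≡ k * p [MOD n] := by
        apply Nat.ModEq.add_left_cancel' (t + s)
        show (t + s + k₁ * p) % n = (t + s + k * p) % n
        rw [Nat.add_assoc, Nat.add_assoc, heqz, ← ht₁', ← hs₁']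
        exact he₁
      have hkk : k₁ * p = k * p := by
        have h5 := hcan
        unfold Nat.ModEq at h5
        rwa [Nat.mod_eq_of_lt hk₁lt, Nat.mod_eq_of_lt hklt] at h5
      have hkk' : k₁ = k := Nat.eq_of_mul_eq_mul_right hp0 hkk
      rw [Prod.mk.injEq]
      exact ⟨ht₁', by rw [hs₁', hkk']⟩
    · -- ¬ n ∣ p
      intro hd
      exact absurd (Nat.le_of_dvd hp0 hd) (not_le.mpr hplt)
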